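/- For every n ≥ 1, both the lamplighter transition operator M_L^{(n)} and the BBS translation transition operator M_B^{(n)} are ergodic. -/
import Mathlib


open Matrix

/-- Equivalence identifying `Fin (2^n) ⊕ Fin (2^n)` with `Fin (2^(n+1))`. -/
def blockEquiv (n : ℕ) : Fin (2 ^ n) ⊕ Fin (2 ^ n) ≃ Fin (2 ^ (n + 1)) :=
  finSumFinEquiv.trans (finCongr (by rw [pow_succ, mul_two]))

/-- Assemble a `2^(n+1) × 2^(n+1)` matrix from four `2^n × 2^n` blocks. -/
noncomputable def mkBlock {n : ℕ} (A B C D : Matrix (Fin (2 ^ n)) (Fin (2 ^ n)) ℝ) :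
    Matrix (Fin (2 ^ (n + 1))) (Fin (2 ^ (n + 1))) ℝ :=
  Matrix.reindex (blockEquiv n) (blockEquiv n) (Matrix.fromBlocks A B C D)

/-- The pair of BBS translation generators. -/
noncomputable def abB : (n : ℕ) →
    Matrix (Fin (2 ^ n)) (Fin (2 ^ n)) ℝ × Matrix (Fin (2 ^ n)) (Fin (2 ^ n)) ℝ
  | 0 => (1, 1)
  | n + 1 => (mkBlock (abB n).1 (abB n).2 0 0, mkBlock 0 0 (abB n).1 (abB n).2)

noncomputable def aB (n : ℕ) : Matrix (Fin (2 ^ n)) (Fin (2 ^ n)) ℝ := (abB n).1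
noncomputable def bB (n : ℕ) : Matrix (Fin (2 ^ n)) (Fin (2 ^ n)) ℝ := (abB n).2

/-- The pair of lamplighter generators. -/
noncomputable def abL : (n : ℕ) →
    Matrix (Fin (2 ^ n)) (Fin (2 ^ n)) ℝ × Matrix (Fin (2 ^ n)) (Fin (2 ^ n)) ℝ
  | 0 => (1, 1)
  | n + 1 => (mkBlock 0 (abL n).2 (abL n).1 0, mkBlock (abL n).1 0 0 (abL n).2)

noncomputable def aL (n : ℕ) : Matrix (Fin (2 ^ n)) (Fin (2 ^ n)) ℝ := (abL n).1
noncomputable def bL (n : ℕ) : Matrix (Fin (2 ^ n)) (Fin (2 ^ n)) ℝ := (abL n).2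

/-- The BBS translation transition operator. -/
noncomputable def MB (n : ℕ) : Matrix (Fin (2 ^ n)) (Fin (2 ^ n)) ℝ :=
  (1 / 4 : ℝ) • (aB n + (aB n)ᵀ + bB n + (bB n)ᵀ)

/-- The lamplighter transition operator. -/
noncomputable def ML (n : ℕ) : Matrix (Fin (2 ^ n)) (Fin (2 ^ n)) ℝ :=
  (1 / 4 : ℝ) • (aL n + (aL n)ᵀ + bL n + (bL n)ᵀ)

/-- A real `N × N` matrix is ergodic if some power `M^s`, `s ≥ 1`, has all entries
strictly positive. -/
def IsErgodic {N : ℕ} (M : Matrix (Fin N) (Fin N) ℝ) : Prop :=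
  ∃ s : ℕ, 1 ≤ s ∧ ∀ i j, 0 < (M ^ s) i j

namespace Erg

/-- The last index of `Fin (2^n)`. -/
def last2 (n : ℕ) : Fin (2 ^ n) := ⟨2 ^ n - 1, by
  have := Nat.one_le_two_pow (n := n); omega⟩

def Nonneg {N : ℕ} (M : Matrix (Fin N) (Fin N) ℝ) : Prop := ∀ i j, 0 ≤ M i j

lemma pow_nonneg {N : ℕ} {M : Matrix (Fin N) (Fin N) ℝ} (h : Nonneg M) (p : ℕ) :
    Nonneg (M ^ p) := by
  induction p with
  | zero =>
    intro i j
    simp only [pow_zero, Matrix.one_apply]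
    split <;> norm_num
  | succ p ih =>
    intro i j
    rw [pow_succ, Matrix.mul_apply]
    exact Finset.sum_nonneg fun k _ => mul_nonneg (ih i k) (h k j)

lemma pow_pos_trans {N : ℕ} {M : Matrix (Fin N) (Fin N) ℝ} (h : Nonneg M)
    {u v : ℕ} {i j k : Fin N} (hu : 0 < (M ^ u) i j) (hv : 0 < (M ^ v) j k) :
    0 < (M ^ (u + v)) i k := by
  rw [pow_add, Matrix.mul_apply]
  refine Finset.sum_pos' (fun l _ => mul_nonneg (pow_nonneg h u i l) (pow_nonneg h v l k))
    ⟨j, Finset.mem_univ j, mul_pos hu hv⟩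

def Reach {N : ℕ} (M : Matrix (Fin N) (Fin N) ℝ) (i j : Fin N) : Prop :=
  ∃ p, 0 < (M ^ p) i j

lemma Reach.trans {N : ℕ} {M : Matrix (Fin N) (Fin N) ℝ} (h : Nonneg M)
    {i j k : Fin N} (h1 : Reach M i j) (h2 : Reach M j k) : Reach M i k := by
  obtain ⟨u, hu⟩ := h1; obtain ⟨v, hv⟩ := h2
  exact ⟨u + v, pow_pos_trans h hu hv⟩

lemma reach_of_pos {N : ℕ} {M : Matrix (Fin N) (Fin N) ℝ} {i j : Fin N}
    (h : 0 < M i j) : Reach M i j := ⟨1, by simpa [pow_one] using h⟩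

lemma reach_refl {N : ℕ} (M : Matrix (Fin N) (Fin N) ℝ) (i : Fin N) : Reach M i i :=
  ⟨0, by simp [Matrix.one_apply_eq]⟩

/-- Ergodicity criterion. -/
lemma ergodic_of {N : ℕ} {M : Matrix (Fin N) (Fin N) ℝ} (h0 : Nonneg M)
    (hsym : Mᵀ = M) (i0 : Fin N) (hloop : 0 < M i0 i0)
    (hconn : ∀ i, Reach M i i0) : IsErgodic M := by
  choose p hp using hconn
  set P := Finset.univ.sup p with hP
  refine ⟨2 * P + 1, by omega, fun i j => ?_⟩
  have hpi : p i ≤ P := Finset.le_sup (Finset.mem_univ i)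
  have hpj : p j ≤ P := Finset.le_sup (Finset.mem_univ j)
  have hloopk : ∀ k, 0 < (M ^ k) i0 i0 := by
    intro k
    induction k with
    | zero => simp [Matrix.one_apply_eq]
    | succ k ih =>
      have := pow_pos_trans h0 ih (show 0 < (M ^ 1) i0 i0 by simpa [pow_one] using hloop)
      simpa using this
  have hsp : ∀ q : ℕ, (M ^ q)ᵀ = M ^ q := by
    intro q; rw [Matrix.transpose_pow, hsym]
  have hji : 0 < (M ^ (p j)) i0 j := by
    have h := hp j
    rw [← hsp (p j)]
    simpa [Matrix.transpose_apply] using h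
  have harith : 2 * P + 1 = p i + ((2 * P + 1 - p i - p j) + p j) := by omega
  rw [harith]
  exact pow_pos_trans h0 (hp i) (pow_pos_trans h0 (hloopk _) hji)

lemma mkBlock_apply {n : ℕ} (A B C D : Matrix (Fin (2 ^ n)) (Fin (2 ^ n)) ℝ)
    (z w : Fin (2 ^ n) ⊕ Fin (2 ^ n)) :
    mkBlock A B C D (blockEquiv n z) (blockEquiv n w) = Matrix.fromBlocks A B C D z w := by
  simp [mkBlock]

lemma blockEquiv_inr_last (n : ℕ) : blockEquiv n (Sum.inr (last2 n)) = last2 (n + 1) := by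
  apply Fin.ext
  have h1 : (blockEquiv n (Sum.inr (last2 n))).val = 2 ^ n + (2 ^ n - 1) := by
    simp [blockEquiv, last2]
    omega
  have := Nat.one_le_two_pow (n := n)
  rw [h1]
  show _ = (last2 (n+1)).val
  simp only [last2, pow_succ]
  omega


/-- The canonical symmetric block form shared by both recursions. -/
noncomputable def canon {n : ℕ} (A B : Matrix (Fin (2 ^ n)) (Fin (2 ^ n)) ℝ) :
    Matrix (Fin (2 ^ n) ⊕ Fin (2 ^ n)) (Fin (2 ^ n) ⊕ Fin (2 ^ n)) ℝ :=
  Matrix.fromBlocks (A + Aᵀ) (B + Aᵀ) (A + Bᵀ) (B + Bᵀ)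

lemma canon_symm {n : ℕ} (A B : Matrix (Fin (2 ^ n)) (Fin (2 ^ n)) ℝ) (z w) :
    canon A B z w = canon A B w z := by
  rcases z with x | x <;> rcases w with y | y <;>
    simp [canon, Matrix.add_apply, Matrix.transpose_apply] <;> ring

lemma canon_nonneg {n : ℕ} {A B : Matrix (Fin (2 ^ n)) (Fin (2 ^ n)) ℝ}
    (hA : Nonneg A) (hB : Nonneg B) (z w) : 0 ≤ canon A B z w := by
  rcases z with x | x <;> rcases w with y | y <;>
    simp [canon, Matrix.add_apply, Matrix.transpose_apply] <;>
    first
      | exact add_nonneg (hA _ _) (hA _ _)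
      | exact add_nonneg (hB _ _) (hA _ _)
      | exact add_nonneg (hA _ _) (hB _ _)
      | exact add_nonneg (hB _ _) (hB _ _)

/-- The generic induction step: connectivity to the last vertex lifts one level. -/
lemma step {n : ℕ} {A B : Matrix (Fin (2 ^ n)) (Fin (2 ^ n)) ℝ}
    {M : Matrix (Fin (2 ^ n)) (Fin (2 ^ n)) ℝ}
    {M' : Matrix (Fin (2 ^ (n + 1))) (Fin (2 ^ (n + 1))) ℝ}
    (hM : M = (1 / 4 : ℝ) • (A + Aᵀ + B + Bᵀ))
    (hM' : ∀ z w, M' (blockEquiv n z) (blockEquiv n w) = (1 / 4 : ℝ) * canon A B z w)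
    (hA : Nonneg A) (hB : Nonneg B)
    (hrow : ∀ x, ∃ j, 0 < A x j ∨ 0 < B x j)
    (hconn : ∀ x, Reach M x (last2 n)) :
    ∀ u, Reach M' u (last2 (n + 1)) := by
  set e := blockEquiv n with he
  -- nonnegativity of M'
  have hM'nn : Nonneg M' := by
    intro u v
    obtain ⟨z, rfl⟩ := e.surjective u
    obtain ⟨w, rfl⟩ := e.surjective v
    rw [hM']
    have := canon_nonneg hA hB z w
    positivity
  have hMnn : Nonneg M := by
    intro i j
    rw [hM]
    simp only [Matrix.smul_apply, Matrix.add_apply, Matrix.transpose_apply, smul_eq_mul]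
    have := hA i j; have := hA j i; have := hB i j; have := hB j i
    nlinarith
  -- symmetry of M' on all entries
  have hM'sym : ∀ u v, M' u v = M' v u := by
    intro u v
    obtain ⟨z, rfl⟩ := e.surjective u
    obtain ⟨w, rfl⟩ := e.surjective v
    rw [hM', hM', canon_symm]
  -- edge lemmas
  have eA : ∀ x y, 0 < A x y →
      0 < M' (e (Sum.inl x)) (e (Sum.inl y)) ∧ 0 < M' (e (Sum.inr x)) (e (Sum.inl y)) := by
    intro x y h
    constructor <;> rw [hM'] <;>
      [ (have h2 : (0:ℝ) ≤ Aᵀ x y := hA y x);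
        (have h2 : (0:ℝ) ≤ Bᵀ x y := hB y x) ] <;>
      simp only [canon, Matrix.fromBlocks_apply₁₁, Matrix.fromBlocks_apply₂₁,
        Matrix.add_apply] <;> nlinarith
  have eB : ∀ x y, 0 < B x y →
      0 < M' (e (Sum.inl x)) (e (Sum.inr y)) ∧ 0 < M' (e (Sum.inr x)) (e (Sum.inr y)) := by
    intro x y h
    constructor <;> rw [hM'] <;>
      [ (have h2 : (0:ℝ) ≤ Aᵀ x y := hA y x);
        (have h2 : (0:ℝ) ≤ Bᵀ x y := hB y x) ] <;>
      simp only [canon, Matrix.fromBlocks_apply₁₂, Matrix.fromBlocks_apply₂₂,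
        Matrix.add_apply] <;> nlinarith
  -- flip between the two copies of a vertex
  have flip : ∀ x, Reach M' (e (Sum.inl x)) (e (Sum.inr x)) ∧
      Reach M' (e (Sum.inr x)) (e (Sum.inl x)) := by
    intro x
    obtain ⟨j, hj | hj⟩ := hrow x
    · obtain ⟨h1, h2⟩ := eA x j hj
      have h2' : 0 < M' (e (Sum.inl j)) (e (Sum.inr x)) := by rw [hM'sym]; exact h2
      have h1' : 0 < M' (e (Sum.inl j)) (e (Sum.inl x)) := by rw [hM'sym]; exact h1
      exact ⟨(reach_of_pos h1).trans hM'nn (reach_of_pos h2'),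
        (reach_of_pos h2).trans hM'nn (reach_of_pos h1')⟩
    · obtain ⟨h1, h2⟩ := eB x j hj
      have h2' : 0 < M' (e (Sum.inr j)) (e (Sum.inr x)) := by rw [hM'sym]; exact h2
      have h1' : 0 < M' (e (Sum.inr j)) (e (Sum.inl x)) := by rw [hM'sym]; exact h1
      exact ⟨(reach_of_pos h1).trans hM'nn (reach_of_pos h2'),
        (reach_of_pos h2).trans hM'nn (reach_of_pos h1')⟩
  -- an M-edge is simulated between bottom copies
  have sim : ∀ x y, 0 < M x y → Reach M' (e (Sum.inl x)) (e (Sum.inl y)) := by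
    intro x y h
    have hcase : 0 < A x y ∨ 0 < A y x ∨ 0 < B x y ∨ 0 < B y x := by
      by_contra hc
      push_neg at hc
      obtain ⟨c1, c2, c3, c4⟩ := hc
      have e1 : A x y = 0 := le_antisymm c1 (hA x y)
      have e2 : A y x = 0 := le_antisymm c2 (hA y x)
      have e3 : B x y = 0 := le_antisymm c3 (hB x y)
      have e4 : B y x = 0 := le_antisymm c4 (hB y x)
      rw [hM] at h
      simp only [Matrix.smul_apply, Matrix.add_apply, Matrix.transpose_apply,
        e1, e2, e3, e4, smul_eq_mul] at h
      norm_num at h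
    rcases hcase with h' | h' | h' | h'
    · exact reach_of_pos (eA x y h').1
    · have := (eA y x h').1
      rw [hM'sym] at this
      exact reach_of_pos this
    · exact (reach_of_pos (eB x y h').1).trans hM'nn (flip y).2
    · have := (eB y x h').1
      rw [hM'sym] at this
      exact ((flip x).1).trans hM'nn (reach_of_pos this)
  -- reachability in M lifts to reachability between bottom copies in M'
  have simR : ∀ x y, Reach M x y → Reach M' (e (Sum.inl x)) (e (Sum.inl y)) := by
    intro x y ⟨q, hq⟩
    induction q generalizing x with
    | zero =>
      have : x = y := by
        by_contra hxy
        rw [pow_zero, Matrix.one_apply_ne hxy] at hq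
        exact lt_irrefl 0 hq
      subst this
      exact reach_refl _ _
    | succ q ih =>
      rw [pow_succ', Matrix.mul_apply] at hq
      have : ∃ m, 0 < M x m * (M ^ q) m y := by
        by_contra hc
        push_neg at hc
        have : ∑ m, M x m * (M ^ q) m y ≤ 0 := Finset.sum_nonpos fun m _ => hc m
        linarith
      obtain ⟨m, hm⟩ := this
      have h1 : 0 < M x m := by
        rcases lt_or_eq_of_le (hMnn x m) with h | h
        · exact h
        · rw [← h] at hm; simp at hm
      have h2 : 0 < (M ^ q) m y := by
        rcases lt_or_eq_of_le (pow_nonneg hMnn q m y) with h | h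
        · exact h
        · rw [← h] at hm; simp at hm
      exact (sim x m h1).trans hM'nn (ih m h2)
  -- conclusion
  intro u
  obtain ⟨z, rfl⟩ := e.surjective u
  have hlast : Reach M' (e (Sum.inl (last2 n))) (last2 (n + 1)) := by
    rw [← blockEquiv_inr_last n]
    exact (flip (last2 n)).1
  rcases z with x | x
  · exact (simR x (last2 n) (hconn x)).trans hM'nn hlast
  · exact ((flip x).2).trans hM'nn ((simR x (last2 n) (hconn x)).trans hM'nn hlast)


lemma aL_succ (n : ℕ) : aL (n + 1) = mkBlock 0 (bL n) (aL n) 0 := rfl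
lemma bL_succ (n : ℕ) : bL (n + 1) = mkBlock (aL n) 0 0 (bL n) := rfl
lemma aB_succ (n : ℕ) : aB (n + 1) = mkBlock (aB n) (bB n) 0 0 := rfl
lemma bB_succ (n : ℕ) : bB (n + 1) = mkBlock 0 0 (aB n) (bB n) := rfl

lemma nonneg_L : ∀ n, Nonneg (aL n) ∧ Nonneg (bL n) := by
  intro n
  induction n with
  | zero =>
    constructor <;> intro i j <;>
      simp only [aL, bL, abL, Matrix.one_apply] <;> split <;> norm_num
  | succ n ih =>
    obtain ⟨ha, hb⟩ := ih
    constructor <;> intro u v <;>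
      obtain ⟨z, rfl⟩ := (blockEquiv n).surjective u <;>
      obtain ⟨w, rfl⟩ := (blockEquiv n).surjective v <;>
      [rw [aL_succ, mkBlock_apply]; rw [bL_succ, mkBlock_apply]] <;>
      rcases z with x | x <;> rcases w with y | y <;>
      simp [ha x y, hb x y]
  
lemma nonneg_B : ∀ n, Nonneg (aB n) ∧ Nonneg (bB n) := by
  intro n
  induction n with
  | zero =>
    constructor <;> intro i j <;>
      simp only [aB, bB, abB, Matrix.one_apply] <;> split <;> norm_num
  | succ n ih =>
    obtain ⟨ha, hb⟩ := ih
    constructor <;> intro u v <;>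
      obtain ⟨z, rfl⟩ := (blockEquiv n).surjective u <;>
      obtain ⟨w, rfl⟩ := (blockEquiv n).surjective v <;>
      [rw [aB_succ, mkBlock_apply]; rw [bB_succ, mkBlock_apply]] <;>
      rcases z with x | x <;> rcases w with y | y <;>
      simp [ha x y, hb x y]

lemma row_L : ∀ n x, ∃ j, 0 < aL n x j ∨ 0 < bL n x j := by
  intro n
  induction n with
  | zero =>
    intro x
    exact ⟨x, Or.inl (by simp [aL, abL, Matrix.one_apply_eq])⟩
  | succ n ih =>
    intro u
    obtain ⟨z, rfl⟩ := (blockEquiv n).surjective u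
    rcases z with x | x
    · obtain ⟨j, hj | hj⟩ := ih x
      · exact ⟨blockEquiv n (Sum.inl j), Or.inr (by rw [bL_succ, mkBlock_apply]; simpa)⟩
      · exact ⟨blockEquiv n (Sum.inr j), Or.inl (by rw [aL_succ, mkBlock_apply]; simpa)⟩
    · obtain ⟨j, hj | hj⟩ := ih x
      · exact ⟨blockEquiv n (Sum.inl j), Or.inl (by rw [aL_succ, mkBlock_apply]; simpa)⟩
      · exact ⟨blockEquiv n (Sum.inr j), Or.inr (by rw [bL_succ, mkBlock_apply]; simpa)⟩

lemma row_B : ∀ n x, ∃ j, 0 < aB n x j ∨ 0 < bB n x j := by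
  intro n
  induction n with
  | zero =>
    intro x
    exact ⟨x, Or.inl (by simp [aB, abB, Matrix.one_apply_eq])⟩
  | succ n ih =>
    intro u
    obtain ⟨z, rfl⟩ := (blockEquiv n).surjective u
    rcases z with x | x
    · obtain ⟨j, hj | hj⟩ := ih x
      · exact ⟨blockEquiv n (Sum.inl j), Or.inl (by rw [aB_succ, mkBlock_apply]; simpa)⟩
      · exact ⟨blockEquiv n (Sum.inr j), Or.inl (by rw [aB_succ, mkBlock_apply]; simpa)⟩
    · obtain ⟨j, hj | hj⟩ := ih x
      · exact ⟨blockEquiv n (Sum.inl j), Or.inr (by rw [bB_succ, mkBlock_apply]; simpa)⟩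
      · exact ⟨blockEquiv n (Sum.inr j), Or.inr (by rw [bB_succ, mkBlock_apply]; simpa)⟩

lemma diag_L : ∀ n, 0 < bL n (last2 n) (last2 n) := by
  intro n
  induction n with
  | zero => simp [bL, abL, Matrix.one_apply_eq]
  | succ n ih =>
    rw [← blockEquiv_inr_last n, bL_succ, mkBlock_apply]
    simpa

lemma diag_B : ∀ n, 0 < bB n (last2 n) (last2 n) := by
  intro n
  induction n with
  | zero => simp [bB, abB, Matrix.one_apply_eq]
  | succ n ih =>
    rw [← blockEquiv_inr_last n, bB_succ, mkBlock_apply]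
    simpa

lemma ML_succ_apply (n : ℕ) (z w : Fin (2 ^ n) ⊕ Fin (2 ^ n)) :
    ML (n + 1) (blockEquiv n z) (blockEquiv n w) = (1 / 4 : ℝ) * canon (aL n) (bL n) z w := by
  have h : ∀ u v, ML (n+1) u v = (1/4 : ℝ) *
      (aL (n+1) u v + aL (n+1) v u + bL (n+1) u v + bL (n+1) v u) := by
    intro u v
    simp [ML, Matrix.smul_apply, Matrix.add_apply, Matrix.transpose_apply]
  rw [h]
  rw [aL_succ, bL_succ]
  rw [mkBlock_apply, mkBlock_apply, mkBlock_apply, mkBlock_apply]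
  rcases z with x | x <;> rcases w with y | y <;>
    simp [canon, Matrix.add_apply, Matrix.transpose_apply] <;> ring

lemma MB_succ_apply (n : ℕ) (z w : Fin (2 ^ n) ⊕ Fin (2 ^ n)) :
    MB (n + 1) (blockEquiv n z) (blockEquiv n w) = (1 / 4 : ℝ) * canon (aB n) (bB n) z w := by
  have h : ∀ u v, MB (n+1) u v = (1/4 : ℝ) *
      (aB (n+1) u v + aB (n+1) v u + bB (n+1) u v + bB (n+1) v u) := by
    intro u v
    simp [MB, Matrix.smul_apply, Matrix.add_apply, Matrix.transpose_apply]
  rw [h]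
  rw [aB_succ, bB_succ]
  rw [mkBlock_apply, mkBlock_apply, mkBlock_apply, mkBlock_apply]
  rcases z with x | x <;> rcases w with y | y <;>
    simp [canon, Matrix.add_apply, Matrix.transpose_apply] <;> ring

lemma conn_L : ∀ n x, Reach (ML n) x (last2 n) := by
  intro n
  induction n with
  | zero =>
    intro x
    have : x = last2 0 := by
      apply Fin.ext
      have h := x.2
      simp only [pow_zero] at h
      simp [last2]
    rw [this]; exact reach_refl _ _
  | succ n ih =>
    exact step rfl (ML_succ_apply n) (nonneg_L n).1 (nonneg_L n).2 (row_L n) ih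

lemma conn_B : ∀ n x, Reach (MB n) x (last2 n) := by
  intro n
  induction n with
  | zero =>
    intro x
    have : x = last2 0 := by
      apply Fin.ext
      have h := x.2
      simp only [pow_zero] at h
      simp [last2]
    rw [this]; exact reach_refl _ _
  | succ n ih =>
    exact step rfl (MB_succ_apply n) (nonneg_B n).1 (nonneg_B n).2 (row_B n) ih

lemma ML_nonneg (n : ℕ) : Nonneg (ML n) := by
  intro i j
  simp only [ML, Matrix.smul_apply, Matrix.add_apply, Matrix.transpose_apply, smul_eq_mul]
  have := (nonneg_L n).1 i j; have := (nonneg_L n).1 j i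
  have := (nonneg_L n).2 i j; have := (nonneg_L n).2 j i
  nlinarith

lemma MB_nonneg (n : ℕ) : Nonneg (MB n) := by
  intro i j
  simp only [MB, Matrix.smul_apply, Matrix.add_apply, Matrix.transpose_apply, smul_eq_mul]
  have := (nonneg_B n).1 i j; have := (nonneg_B n).1 j i
  have := (nonneg_B n).2 i j; have := (nonneg_B n).2 j i
  nlinarith

lemma ML_symm (n : ℕ) : (ML n)ᵀ = ML n := by
  ext i j
  simp only [ML, Matrix.transpose_apply, Matrix.smul_apply, Matrix.add_apply, smul_eq_mul]
  ring

lemma MB_symm (n : ℕ) : (MB n)ᵀ = MB n := by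
  ext i j
  simp only [MB, Matrix.transpose_apply, Matrix.smul_apply, Matrix.add_apply, smul_eq_mul]
  ring

lemma ML_loop (n : ℕ) : 0 < ML n (last2 n) (last2 n) := by
  simp only [ML, Matrix.smul_apply, Matrix.add_apply, Matrix.transpose_apply, smul_eq_mul]
  have h1 := (nonneg_L n).1 (last2 n) (last2 n)
  have h2 := diag_L n
  nlinarith

lemma MB_loop (n : ℕ) : 0 < MB n (last2 n) (last2 n) := by
  simp only [MB, Matrix.smul_apply, Matrix.add_apply, Matrix.transpose_apply, smul_eq_mul]
  have h1 := (nonneg_B n).1 (last2 n) (last2 n)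
  have h2 := diag_B n
  nlinarith


end Erg

/-- For every `n ≥ 1`, both the lamplighter transition operator and the BBS
translation transition operator are ergodic. -/

theorem lamplighter_bbs_ergodic (n : ℕ) (hn : 1 ≤ n) :
    IsErgodic (ML n) ∧ IsErgodic (MB n) := by
  constructor
  · exact Erg.ergodic_of (Erg.ML_nonneg n) (Erg.ML_symm n) (Erg.last2 n)
      (Erg.ML_loop n) (Erg.conn_L n)
  · exact Erg.ergodic_of (Erg.MB_nonneg n) (Erg.MB_symm n) (Erg.last2 n)
      (Erg.MB_loop n) (Erg.conn_B n)
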